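/- In the generalized Thompson group G = F_{n,∞}, for any homomorphism χ : G → ℝ one has χ(x_{i+n-1}) = χ(x_i) for all i ≥ 1; consequently χ is determined by its values on x_0, x_1, ..., x_{n-1}, and the real vector space Hom(G, ℝ) has dimension n. -/

import Mathlib

/-- The defining relators of the generalised Thompson group `F_{n,∞}`. -/
def thompsonRels (n : ℕ) : Set (FreeGroup ℕ) :=
  {r | ∃ i j : ℕ, j < i ∧
    r = (FreeGroup.of j)⁻¹ * FreeGroup.of i * FreeGroup.of j * (FreeGroup.of (i + n - 1))⁻¹}

/-- The generalised Thompson group `F_{n,∞}`. -/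
abbrev FnInfty (n : ℕ) : Type := PresentedGroup (thompsonRels n)

/-- The generator `x_i` of `F_{n,∞}`. -/
def xg (n i : ℕ) : FnInfty n := PresentedGroup.of i

/-!
Conjugating `x_i` by `x_0` gives `x_{i+n-1}`, and conjugation is invisible to a homomorphism into
an abelian group, so every `χ` is constant on each class `{i, i + (n-1), i + 2(n-1), …}` with
`i ≥ 1`. Conversely such a function on the generators kills every relator, hence extends. The
classes are represented by `0, 1, …, n-1`, so `χ ↦ (χ x_0, …, χ x_{n-1})` is a linear bijection
`Hom(F_{n,∞}, A) ≃ Aⁿ`.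
-/

namespace FnInfty

variable {n : ℕ}

theorem xg_conj {i j : ℕ} (hji : j < i) : (xg n j)⁻¹ * xg n i * xg n j = xg n (i + n - 1) := by
  have hrel : PresentedGroup.mk (thompsonRels n)
      ((FreeGroup.of j)⁻¹ * FreeGroup.of i * FreeGroup.of j * (FreeGroup.of (i + n - 1))⁻¹) = 1 :=
    (QuotientGroup.eq_one_iff _).2 (Subgroup.subset_normalClosure ⟨i, j, hji, rfl⟩)
  simpa [xg, PresentedGroup.of, mul_inv_eq_one] using hrel

section ShiftInvariant

variable {α : Type*}

def ShiftInvariant (n : ℕ) (f : ℕ → α) : Prop :=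
  ∀ i, 1 ≤ i → f (i + n - 1) = f i

/-- The representative in `{0, …, n-1}` of the class of `i`. -/
def reduce (n i : ℕ) : ℕ :=
  if i = 0 then 0 else (i - 1) % (n - 1) + 1

theorem reduce_lt (hn : 2 ≤ n) (i : ℕ) : reduce n i < n := by
  unfold reduce
  split_ifs
  · omega
  · have := Nat.mod_lt (i - 1) (show 0 < n - 1 by omega)
    omega

theorem reduce_of_lt {i : ℕ} (hi : i < n) : reduce n i = i := by
  unfold reduce
  split_ifs with h0
  · exact h0.symm
  · rw [Nat.mod_eq_of_lt (by omega)]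
    omega

theorem shiftInvariant_reduce (hn : 1 ≤ n) : ShiftInvariant n (reduce n) := by
  intro i hi
  unfold reduce
  rw [if_neg (by omega), if_neg (by omega), show i + n - 1 - 1 = i - 1 + (n - 1) by omega,
    Nat.add_mod_right]

theorem ShiftInvariant.apply_add_mul {f : ℕ → α} (hf : ShiftInvariant n f) {i : ℕ} (hi : 1 ≤ i)
    (k : ℕ) : f (i + (n - 1) * k) = f i := by
  induction k with
  | zero => simp
  | succ k ih =>
    rcases Nat.eq_zero_or_pos n with rfl | hn
    · simp
    · rw [Nat.mul_succ, ← add_assoc, show i + (n - 1) * k + (n - 1) = i + (n - 1) * k + n - 1 by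
        omega, hf _ (by omega), ih]

theorem ShiftInvariant.apply_reduce {f : ℕ → α} (hf : ShiftInvariant n f) (i : ℕ) :
    f (reduce n i) = f i := by
  unfold reduce
  split_ifs with h0
  · rw [h0]
  · conv_rhs => rw [show i = (i - 1) % (n - 1) + 1 + (n - 1) * ((i - 1) / (n - 1)) by
      have := Nat.mod_add_div (i - 1) (n - 1)
      omega]
    exact (hf.apply_add_mul (by omega) _).symm

end ShiftInvariant

variable {A : Type*} [AddCommGroup A]

theorem shiftInvariant_map_xg (χ : Additive (FnInfty n) →+ A) :
    ShiftInvariant n fun i => χ (.ofMul (xg n i)) := by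
  intro i hi
  change χ (.ofMul (xg n (i + n - 1))) = χ (.ofMul (xg n i))
  rw [← xg_conj (show 0 < i by omega)]
  simp only [ofMul_mul, ofMul_inv, map_add, map_neg]
  abel

theorem ShiftInvariant.freeGroup_lift_eq_one {f : ℕ → A} (hf : ShiftInvariant n f) :
    ∀ r ∈ thompsonRels n, FreeGroup.lift (fun i => Multiplicative.ofAdd (f i)) r = 1 := by
  rintro r ⟨i, j, hji, rfl⟩
  simp only [map_mul, map_inv, FreeGroup.lift_apply_of, hf i (by omega)]
  rw [← ofAdd_neg, ← ofAdd_neg, ← ofAdd_add, ← ofAdd_add, ← ofAdd_add, ← ofAdd_zero]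
  congr 1
  abel

noncomputable def ShiftInvariant.lift {f : ℕ → A} (hf : ShiftInvariant n f) :
    Additive (FnInfty n) →+ A :=
  MonoidHom.toAdditiveLeft (PresentedGroup.toGroup hf.freeGroup_lift_eq_one)

@[simp]
theorem ShiftInvariant.lift_xg {f : ℕ → A} (hf : ShiftInvariant n f) (i : ℕ) :
    hf.lift (.ofMul (xg n i)) = f i := by
  simp [ShiftInvariant.lift, xg]

theorem addMonoidHom_ext {χ χ' : Additive (FnInfty n) →+ A}
    (h : ∀ i, χ (.ofMul (xg n i)) = χ' (.ofMul (xg n i))) : χ = χ' :=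
  AddMonoidHom.toMultiplicativeRight.injective <|
    PresentedGroup.ext fun i => congrArg Multiplicative.ofAdd (h i)

noncomputable def homEquivFin (R : Type*) [Semiring R] [Module R A] (hn : 2 ≤ n) :
    (Additive (FnInfty n) →+ A) ≃ₗ[R] (Fin n → A) where
  toFun χ k := χ (.ofMul (xg n k))
  map_add' _ _ := rfl
  map_smul' _ _ := rfl
  invFun v := ShiftInvariant.lift (f := fun i => v ⟨reduce n i, reduce_lt hn i⟩) fun i hi =>
    congrArg v (Fin.ext (shiftInvariant_reduce (by omega) i hi))
  left_inv χ := addMonoidHom_ext fun i =>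
    (ShiftInvariant.lift_xg _ i).trans ((shiftInvariant_map_xg χ).apply_reduce i)
  right_inv v := funext fun k =>
    (ShiftInvariant.lift_xg _ k).trans (congrArg v (Fin.ext (reduce_of_lt k.isLt)))

end FnInfty

/-- For any homomorphism `χ : F_{n,∞} → ℝ` one has `χ(x_{i+n-1}) = χ(x_i)` for `i ≥ 1`;
consequently `χ` is determined by its values on `x_0, ..., x_{n-1}`, and `Hom(F_{n,∞}, ℝ)` is an
`ℝ`-vector space of dimension `n`. -/
theorem stmt_5 (n : ℕ) (hn : 2 ≤ n) :
    (∀ χ : Additive (FnInfty n) →+ ℝ, ∀ i : ℕ, 1 ≤ i →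
        χ (Additive.ofMul (xg n (i + n - 1))) = χ (Additive.ofMul (xg n i))) ∧
    (∀ χ χ' : Additive (FnInfty n) →+ ℝ,
        (∀ i : ℕ, i < n → χ (Additive.ofMul (xg n i)) = χ' (Additive.ofMul (xg n i))) →
        χ = χ') ∧
    Module.rank ℝ (Additive (FnInfty n) →+ ℝ) = n := by
  refine ⟨fun χ => FnInfty.shiftInvariant_map_xg χ, fun χ χ' h => ?_, ?_⟩
  · exact (FnInfty.homEquivFin ℝ hn).injective (funext fun k => h k k.isLt)
  · rw [(FnInfty.homEquivFin ℝ hn).rank_eq, rank_fin_fun]
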